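/- Let μ_1, …, μ_m be probability measures on Polish spaces X_1, …, X_m and let γ_0 be a coupling with marginals μ_i. Given countable Borel partitions (A_i^n)_{n∈ℕ} of each X_i, the block approximation γ_δ := ∑_{n∈ℕ^m} γ_0(A_1^{n_1}×…×A_m^{n_m}) · μ_1^{n_1}⊗…⊗μ_m^{n_m}, where μ_i^n is the normalized restriction of μ_i to A_i^n (taken to be 0 if μ_i(A_i^n)=0), is a probability measure whose i-th marginal equals μ_i for every i. -/

import Mathlib

/-! Pushing a block term forward to the `i`-th factor leaves `γ₀(block) • μ_i^{n_i}`: the other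
factors have mass one because a block of positive `γ₀`-measure has sides of positive
`μ_j`-measure. Grouping the blocks by their `i`-th index, the weights add up to
`γ₀ {x | x_i ∈ A_i^k} = μ_i(A_i^k)`, and `μ_i(A_i^k) • μ_i^k = μ_i|A_i^k`, which sum to `μ_i`
over the partition. The total mass is `∑ₙ γ₀(block n) = 1` for the same reason. -/

open MeasureTheory
open scoped ENNReal

/-- The normalized restriction of `μ` to `A`, taken to be `0` if `μ A = 0`. -/
noncomputable def normRestrict {X : Type*} [MeasurableSpace X] (μ : Measure X) (A : Set X) :
    Measure X :=
  if μ A = 0 then 0 else (μ A)⁻¹ • μ.restrict A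

/-- The block approximation of a coupling `γ₀`. -/
noncomputable def blockApprox {m : ℕ} {X : Fin m → Type*} [∀ i, MeasurableSpace (X i)]
    (μ : ∀ i, Measure (X i)) (γ₀ : Measure (∀ i, X i)) (A : ∀ i, ℕ → Set (X i)) :
    Measure (∀ i, X i) :=
  Measure.sum fun n : Fin m → ℕ =>
    γ₀ (Set.univ.pi fun i => A i (n i)) • Measure.pi fun i => normRestrict (μ i) (A i (n i))

open Set

section normRestrict

variable {X : Type*} [MeasurableSpace X] (μ : Measure X) (A : Set X)

instance normRestrict.instIsFiniteMeasure [IsFiniteMeasure μ] :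
    IsFiniteMeasure (normRestrict μ A) := by
  unfold normRestrict
  split_ifs with h
  · infer_instance
  · exact ⟨ENNReal.mul_lt_top (ENNReal.inv_lt_top.2 (pos_iff_ne_zero.2 h)) (by simp)⟩

lemma normRestrict_apply_univ (h0 : μ A ≠ 0) (htop : μ A ≠ ∞) :
    normRestrict μ A univ = 1 := by
  simp [normRestrict, h0, ENNReal.inv_mul_cancel h0 htop]

lemma measure_smul_normRestrict (htop : μ A ≠ ∞) : μ A • normRestrict μ A = μ.restrict A := by
  unfold normRestrict
  split_ifs with h
  · rw [h, zero_smul, eq_comm, ← Measure.measure_univ_eq_zero, Measure.restrict_apply_univ, h]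
  · rw [smul_smul, ENNReal.mul_inv_cancel h htop, one_smul]

end normRestrict

namespace MeasureTheory.Measure

lemma sum_smul_comp_eq_sum_tsum_fiber {ι κ α : Type*} [MeasurableSpace α]
    (c : ι → ℝ≥0∞) (ν : κ → Measure α) (f : ι → κ) :
    Measure.sum (fun n => c n • ν (f n)) =
      Measure.sum (fun k => (∑' n : f ⁻¹' {k}, c n) • ν k) := by
  ext s hs
  simp only [Measure.sum_apply _ hs, Measure.smul_apply, smul_eq_mul]
  rw [← ENNReal.tsum_fiberwise _ f]
  refine tsum_congr fun k => ?_
  rw [← ENNReal.tsum_mul_right]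
  exact tsum_congr fun n => by rw [show f n = k from n.2]

end MeasureTheory.Measure

section ProductPartition

variable {ι κ : Type*} {X : ι → Type*} {A : ∀ i, κ → Set (X i)}

lemma pairwise_disjoint_univ_pi (hdisj : ∀ i, Pairwise (Function.onFun Disjoint (A i))) :
    Pairwise (Function.onFun Disjoint fun n : ι → κ => univ.pi fun i => A i (n i)) := by
  intro n n' hne
  obtain ⟨i, hi⟩ := Function.ne_iff.1 hne
  exact disjoint_univ_pi.2 ⟨i, hdisj i hi⟩

lemma iUnion_univ_pi_eq_univ (hcover : ∀ i, ⋃ k, A i k = univ) :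
    ⋃ n : ι → κ, univ.pi (fun i => A i (n i)) = univ := by
  simp [iUnion_univ_pi, hcover]

lemma iUnion_fiber_univ_pi_eq_preimage (hcover : ∀ i, ⋃ k, A i k = univ) (i : ι) (k : κ) :
    ⋃ n : (fun n : ι → κ => n i) ⁻¹' {k}, univ.pi (fun j => A j (n.1 j)) =
      (fun x : ∀ j, X j => x i) ⁻¹' A i k := by
  classical
  ext x
  simp only [mem_iUnion, mem_univ_pi, mem_preimage, Subtype.exists, mem_singleton_iff,
    exists_prop]
  constructor
  · rintro ⟨n, rfl, hn⟩
    exact hn i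
  · intro hx
    choose n hn using fun j => mem_iUnion.1 (hcover j ▸ mem_univ (x j))
    refine ⟨Function.update n i k, Function.update_self .., fun j => ?_⟩
    rcases eq_or_ne j i with rfl | hj
    · simpa using hx
    · simpa [hj] using hn j

end ProductPartition

section Coupling

variable {ι : Type*} {X : ι → Type*} [∀ i, MeasurableSpace (X i)]
  {μ : ∀ i, Measure (X i)} {γ₀ : Measure (∀ i, X i)}

lemma measure_univ_pi_le_of_map_eval {i : ι} (hmarg : γ₀.map (fun x => x i) = μ i)
    (s : ∀ i, Set (X i)) (hs : MeasurableSet (s i)) :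
    γ₀ (univ.pi s) ≤ μ i (s i) := by
  rw [← hmarg, Measure.map_apply (measurable_pi_apply i) hs]
  exact measure_mono fun x hx => hx i (mem_univ i)

lemma measure_univ_pi_mul_prod_normRestrict_univ [∀ i, IsFiniteMeasure (μ i)]
    (hmarg : ∀ i, γ₀.map (fun x => x i) = μ i)
    {s : ∀ i, Set (X i)} (hs : ∀ i, MeasurableSet (s i)) (J : Finset ι) :
    γ₀ (univ.pi s) * ∏ j ∈ J, normRestrict (μ j) (s j) univ = γ₀ (univ.pi s) := by
  rcases eq_or_ne (γ₀ (univ.pi s)) 0 with h | h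
  · rw [h, zero_mul]
  · rw [Finset.prod_eq_one, mul_one]
    intro j _
    exact normRestrict_apply_univ _ _
      (ne_bot_of_le_ne_bot h (measure_univ_pi_le_of_map_eval (hmarg j) s (hs j))) (measure_ne_top _ _)

end Coupling

section BlockApprox

variable {m : ℕ} {X : Fin m → Type*} [∀ i, MeasurableSpace (X i)] {μ : ∀ i, Measure (X i)}
  [∀ i, IsFiniteMeasure (μ i)] {γ₀ : Measure (∀ i, X i)} {A : ∀ i, ℕ → Set (X i)}

lemma blockApprox_apply_univ (hmarg : ∀ i, γ₀.map (fun x => x i) = μ i)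
    (hmeas : ∀ i n, MeasurableSet (A i n)) :
    blockApprox μ γ₀ A univ = ∑' n : Fin m → ℕ, γ₀ (univ.pi fun j => A j (n j)) := by
  simp only [blockApprox, Measure.sum_apply _ MeasurableSet.univ, Measure.smul_apply,
    smul_eq_mul, Measure.pi_univ,
    measure_univ_pi_mul_prod_normRestrict_univ hmarg fun j => hmeas j _]

lemma map_eval_blockApprox (hmarg : ∀ i, γ₀.map (fun x => x i) = μ i)
    (hmeas : ∀ i n, MeasurableSet (A i n)) (i : Fin m) :
    (blockApprox μ γ₀ A).map (fun x => x i) = Measure.sum fun n : Fin m → ℕ =>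
      γ₀ (univ.pi fun j => A j (n j)) • normRestrict (μ i) (A i (n i)) := by
  rw [blockApprox, Measure.map_sum (measurable_pi_apply i).aemeasurable]
  refine congrArg Measure.sum (funext fun n => ?_)
  rw [Measure.map_smul, show (fun x : ∀ j, X j => x i) = Function.eval i from rfl,
    Measure.pi_map_eval, smul_smul,
    measure_univ_pi_mul_prod_normRestrict_univ hmarg fun j => hmeas j _]

end BlockApprox

theorem blockApprox_isProbability_and_marginals_general
    {m : ℕ} {X : Fin m → Type*}
    [∀ i, MeasurableSpace (X i)]
    (μ : ∀ i, Measure (X i)) [∀ i, IsProbabilityMeasure (μ i)]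
    (γ₀ : Measure (∀ i, X i)) [IsProbabilityMeasure γ₀]
    (hmarg : ∀ i, Measure.map (fun x => x i) γ₀ = μ i)
    (A : ∀ i, ℕ → Set (X i))
    (hmeas : ∀ i n, MeasurableSet (A i n))
    (hdisj : ∀ i, Pairwise (Function.onFun Disjoint (A i)))
    (hcover : ∀ i, (⋃ n, A i n) = Set.univ) :
    IsProbabilityMeasure (blockApprox μ γ₀ A) ∧
      ∀ i, Measure.map (fun x => x i) (blockApprox μ γ₀ A) = μ i := by
  have hblock (n : Fin m → ℕ) : MeasurableSet (univ.pi fun j => A j (n j)) :=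
    .univ_pi fun j => hmeas j (n j)
  refine ⟨⟨?_⟩, fun i => ?_⟩
  · rw [blockApprox_apply_univ hmarg hmeas, ← measure_iUnion (pairwise_disjoint_univ_pi hdisj)
      hblock, iUnion_univ_pi_eq_univ hcover, measure_univ]
  calc (blockApprox μ γ₀ A).map (fun x => x i)
      = Measure.sum fun k => γ₀ ((fun x => x i) ⁻¹' A i k) • normRestrict (μ i) (A i k) := by
        rw [map_eval_blockApprox hmarg hmeas, Measure.sum_smul_comp_eq_sum_tsum_fiber _
          (fun k => normRestrict (μ i) (A i k)) (fun n : Fin m → ℕ => n i)]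
        refine congrArg Measure.sum (funext fun k => ?_)
        rw [← iUnion_fiber_univ_pi_eq_preimage hcover, measure_iUnion
          ((pairwise_disjoint_univ_pi hdisj).comp_of_injective Subtype.val_injective)
          fun n => hblock n.1]
    _ = Measure.sum fun k => (μ i).restrict (A i k) := by
        refine congrArg Measure.sum (funext fun k => ?_)
        rw [← Measure.map_apply (measurable_pi_apply i) (hmeas i k), hmarg i,
          measure_smul_normRestrict _ _ (measure_ne_top _ _)]
    _ = μ i := by
        rw [← Measure.restrict_iUnion (hdisj i) (hmeas i), hcover i, Measure.restrict_univ]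

/-- The block approximation of a coupling `γ₀ ∈ Π(μ₁,…,μ_m)` built from countable Borel
partitions of each factor is a probability measure whose `i`-th marginal is `μ i`. -/
theorem blockApprox_isProbability_and_marginals
    {m : ℕ} {X : Fin m → Type*}
    [∀ i, TopologicalSpace (X i)] [∀ i, PolishSpace (X i)]
    [∀ i, MeasurableSpace (X i)] [∀ i, BorelSpace (X i)]
    (μ : ∀ i, Measure (X i)) [∀ i, IsProbabilityMeasure (μ i)]
    (γ₀ : Measure (∀ i, X i)) [IsProbabilityMeasure γ₀]
    (hmarg : ∀ i, Measure.map (fun x => x i) γ₀ = μ i)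
    (A : ∀ i, ℕ → Set (X i))
    (hmeas : ∀ i n, MeasurableSet (A i n))
    (hdisj : ∀ i, Pairwise (Function.onFun Disjoint (A i)))
    (hcover : ∀ i, (⋃ n, A i n) = Set.univ) :
    IsProbabilityMeasure (blockApprox μ γ₀ A) ∧
      ∀ i, Measure.map (fun x => x i) (blockApprox μ γ₀ A) = μ i :=
  blockApprox_isProbability_and_marginals_general μ γ₀ hmarg A hmeas hdisj hcover
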